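/- For each integer k ≥ 2, define ζ : (−1, 1) → ℝ by the power series ζ(x) = Σ_{n=0}^{∞} [ ((k+1)/2)_n · (k/2)_n / ( (k + 1/2)_n · n! ) ] · (−x²)^n, where (a)_n = a(a+1)⋯(a+n−1) denotes the rising factorial (Pochhammer symbol) with (a)_0 = 1. Then this series converges for every x with |x| < 1, ζ is analytic on (−1, 1) with ζ(0) = 1, and ζ satisfies the ordinary differential equation x(1 + x²)ζ″(x) + 2(k + (k+1)x²)ζ′(x) + k(k+1)·x·ζ(x) = 0 for all x ∈ (−1, 1). -/

import Mathlib

noncomputable section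

/-- The coefficient ((k+1)/2)_n (k/2)_n / ((k+1/2)_n n!) of the hypergeometric series
₂F₁((k+1)/2, k/2; k+1/2; ·), written with rising factorials (Pochhammer symbols). -/
def hgCoeff (k n : ℕ) : ℝ :=
  ((ascPochhammer ℝ n).eval (((k : ℝ) + 1) / 2) * (ascPochhammer ℝ n).eval ((k : ℝ) / 2))
    / ((ascPochhammer ℝ n).eval ((k : ℝ) + 1 / 2) * (n.factorial : ℝ))

/-- ζ(x) = Σ_{n=0}^∞ [((k+1)/2)_n (k/2)_n / ((k+1/2)_n n!)] (−x²)^n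
   = ₂F₁((k+1)/2, k/2; k+1/2; −x²). -/
def zetaHG (k : ℕ) : ℝ → ℝ := fun x => ∑' n : ℕ, hgCoeff k n * (-(x ^ 2)) ^ n

/-!
ζ(x) = F(−x²) for Gauss's function F = ₂F₁(a, b; c; ·) with a = (k+1)/2, b = k/2, c = k+1/2,
whose series has radius of convergence 1. Inside the unit disc F solves the hypergeometric
equation t(1−t)F″ + (c − (a+b+1)t)F′ − abF = 0: with Cₙ = (a)ₙ(b)ₙ/((c)ₙ n!), the coefficient of
tⁿ on its left-hand side is (n+1)(n+c)Cₙ₊₁ − (n+a)(n+b)Cₙ, which vanishes because consecutive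
Pochhammer symbols differ by a single linear factor. With t = −x² one has ζ′ = −2xF′ and ζ″ = 4x²F″ − 2F′, so the left-hand side
of the equation for ζ is −4x times that of the hypergeometric equation.
-/

theorem HasSum.of_add_one {G : Type*} [AddCommGroup G] [TopologicalSpace G]
    [IsTopologicalAddGroup G] {f : ℕ → G} {s : G} (h : HasSum (fun n => f (n + 1)) s)
    (h0 : f 0 = 0) : HasSum f s :=
  (hasSum_nat_add_iff' 1).1 (by simpa [h0] using h)

theorem enorm_lt_one_of_norm_lt_one {E : Type*} [SeminormedAddGroup E] {x : E} (hx : ‖x‖ < 1) :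
    ‖x‖ₑ < 1 := by
  simpa [enorm_eq_nnnorm, ← NNReal.coe_lt_one] using hx

section PowerSeries

open FormalMultilinearSeries

variable {𝕜 : Type*} [NontriviallyNormedField 𝕜] {f : 𝕜 → 𝕜} {c : ℕ → 𝕜} {r : ENNReal}

theorem HasFPowerSeriesOnBall.deriv_ofScalars [CompleteSpace 𝕜] {x : 𝕜}
    (h : HasFPowerSeriesOnBall f (ofScalars 𝕜 c) x r) :
    HasFPowerSeriesOnBall (deriv f) (ofScalars 𝕜 fun n => (n + 1) * c (n + 1)) x r := by
  -- `deriv f y = fderiv 𝕜 f y 1`, and a series over `𝕜` is determined by its coefficients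
  convert (ContinuousLinearMap.apply 𝕜 𝕜 (1 : 𝕜)).comp_hasFPowerSeriesOnBall h.fderiv using 1
  · rfl
  funext n
  rw [← mkPiRing_coeff_eq (ofScalars 𝕜 _),
    ← mkPiRing_coeff_eq (ContinuousLinearMap.compFormalMultilinearSeries _ _)]
  congr 1
  rw [coeff_ofScalars]
  calc ((n : 𝕜) + 1) * c (n + 1) = (n + 1) • (ofScalars 𝕜 c).coeff (n + 1) := by
        rw [coeff_ofScalars, nsmul_eq_mul]; push_cast; rfl
    _ = _ := (derivSeries_coeff_one _ n).symm

theorem HasFPowerSeriesOnBall.hasSum_ofScalars_zero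
    (h : HasFPowerSeriesOnBall f (ofScalars 𝕜 c) 0 r) {y : 𝕜} (hy : ‖y‖ₑ < r) :
    HasSum (fun n => c n * y ^ n) (f y) := by
  simpa [ofScalars_apply_eq, mul_comm] using h.hasSum (by simpa using hy)

end PowerSeries

theorem ordinaryHypergeometricCoefficient_succ {𝕂 : Type*} [Field 𝕂] [CharZero 𝕂] (a b c : 𝕂)
    (hc : ∀ kn : ℕ, (kn : 𝕂) ≠ -c) (n : ℕ) :
    (n + 1) * (c + n) * ordinaryHypergeometricCoefficient a b c (n + 1)
      = (a + n) * (b + n) * ordinaryHypergeometricCoefficient a b c n := by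
  have hcn : c + n ≠ 0 := fun h => hc n (by linear_combination h)
  have hpoch : (ascPochhammer 𝕂 n).eval c ≠ 0 := by
    simpa [ascPochhammer_eval_eq_zero_iff] using fun kn _ => hc kn
  simp only [ordinaryHypergeometricCoefficient, ascPochhammer_succ_eval, Nat.factorial_succ]
  push_cast
  field_simp

section Hypergeometric

open FormalMultilinearSeries

variable {𝕂 : Type*} [RCLike 𝕂] {a b c : 𝕂}

theorem ordinaryHypergeometric_hasFPowerSeriesOnBall
    (habc : ∀ kn : ℕ, ↑kn ≠ -a ∧ ↑kn ≠ -b ∧ ↑kn ≠ -c) :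
    HasFPowerSeriesOnBall (₂F₁ a b c) (ordinaryHypergeometricSeries 𝕂 a b c) 0 1 := by
  have hr := ordinaryHypergeometricSeries_radius_eq_one (𝔸 := 𝕂) a b c habc
  rw [← hr]
  exact (ordinaryHypergeometricSeries 𝕂 a b c).hasFPowerSeriesOnBall (by simp [hr])

theorem hasSum_ordinaryHypergeometric (habc : ∀ kn : ℕ, ↑kn ≠ -a ∧ ↑kn ≠ -b ∧ ↑kn ≠ -c)
    {t : 𝕂} (ht : ‖t‖ < 1) :
    HasSum (fun n => ordinaryHypergeometricCoefficient a b c n * t ^ n) (₂F₁ a b c t) :=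
  (ordinaryHypergeometric_hasFPowerSeriesOnBall habc).hasSum_ofScalars_zero
    (enorm_lt_one_of_norm_lt_one ht)

theorem analyticAt_ordinaryHypergeometric (habc : ∀ kn : ℕ, ↑kn ≠ -a ∧ ↑kn ≠ -b ∧ ↑kn ≠ -c)
    {t : 𝕂} (ht : ‖t‖ < 1) : AnalyticAt 𝕂 (₂F₁ a b c) t :=
  (ordinaryHypergeometric_hasFPowerSeriesOnBall habc).analyticAt_of_mem
    (by simpa using enorm_lt_one_of_norm_lt_one ht)

theorem ordinaryHypergeometric_ode (habc : ∀ kn : ℕ, ↑kn ≠ -a ∧ ↑kn ≠ -b ∧ ↑kn ≠ -c)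
    {t : 𝕂} (ht : ‖t‖ < 1) :
    t * (1 - t) * deriv (deriv (₂F₁ a b c)) t + (c - (a + b + 1) * t) * deriv (₂F₁ a b c) t
      - a * b * ₂F₁ a b c t = 0 := by
  set F : 𝕂 → 𝕂 := ₂F₁ a b c
  set C := ordinaryHypergeometricCoefficient a b c
  have hF : HasFPowerSeriesOnBall F (ofScalars 𝕂 C) 0 1 :=
    ordinaryHypergeometric_hasFPowerSeriesOnBall habc
  have ht' := enorm_lt_one_of_norm_lt_one ht
  have hF₀ := hF.hasSum_ofScalars_zero ht'
  have hF₁ := hF.deriv_ofScalars.hasSum_ofScalars_zero ht'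
  have hF₂ := hF.deriv_ofScalars.deriv_ofScalars.hasSum_ofScalars_zero ht'
  have htF₁ : HasSum (fun n : ℕ => n * C n * t ^ n) (t * deriv F t) :=
    ((hF₁.mul_left t).congr_fun fun n => by push_cast; ring).of_add_one (by simp)
  have htF₂ : HasSum (fun n : ℕ => n * (n + 1) * C (n + 1) * t ^ n) (t * deriv (deriv F) t) :=
    ((hF₂.mul_left t).congr_fun fun n => by push_cast; ring).of_add_one (by simp)
  have httF₂ : HasSum (fun n : ℕ => n * (n - 1) * C n * t ^ n) (t * (t * deriv (deriv F) t)) :=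
    ((htF₂.mul_left t).congr_fun fun n => by push_cast; ring).of_add_one (by simp)
  have hrec := ordinaryHypergeometricCoefficient_succ a b c fun kn => (habc kn).2.2
  have hG : HasSum (fun _ : ℕ => (0 : 𝕂)) (t * deriv (deriv F) t + c * deriv F t
      - (t * (t * deriv (deriv F) t) + (a + b + 1) * (t * deriv F t) + a * b * F t)) :=
    ((htF₂.add (hF₁.mul_left c)).sub
      ((httF₂.add (htF₁.mul_left (a + b + 1))).add (hF₀.mul_left (a * b)))).congr_fun
      fun n => by linear_combination -t ^ n * hrec n
  linear_combination hG.unique hasSum_zero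

end Hypergeometric

theorem HasDerivAt.comp_neg_sq {f : ℝ → ℝ} {f' x : ℝ} (hf : HasDerivAt f f' (-(x ^ 2))) :
    HasDerivAt (fun y => f (-(y ^ 2))) (-2 * x * f') x :=
  (hf.comp x (hasDerivAt_pow 2 x).fun_neg).congr_deriv (by push_cast; ring)

theorem deriv_deriv_comp_neg_sq {f : ℝ → ℝ} {x : ℝ}
    (hf : ∀ᶠ y in nhds x, DifferentiableAt ℝ f (-(y ^ 2)))
    (hf' : DifferentiableAt ℝ (deriv f) (-(x ^ 2))) :
    deriv (deriv fun y => f (-(y ^ 2))) x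
      = 4 * x ^ 2 * deriv (deriv f) (-(x ^ 2)) - 2 * deriv f (-(x ^ 2)) := by
  have h1 : deriv (fun y => f (-(y ^ 2))) =ᶠ[nhds x] fun y => -2 * y * deriv f (-(y ^ 2)) :=
    hf.mono fun y hy => hy.hasDerivAt.comp_neg_sq.deriv
  rw [h1.deriv_eq]
  exact ((((hasDerivAt_id' x).const_mul (-2)).mul hf'.hasDerivAt.comp_neg_sq).congr_deriv
    (by ring)).deriv

theorem natCast_ne_neg_of_pos {R : Type*} [Ring R] [PartialOrder R] [IsOrderedRing R] {x : R}
    (hx : 0 < x) (n : ℕ) : (n : R) ≠ -x :=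
  ((neg_neg_of_pos hx).trans_le n.cast_nonneg).ne'

theorem norm_neg_sq_lt_one {x : ℝ} (hx : |x| < 1) : ‖-(x ^ 2)‖ < 1 := by
  rw [norm_neg, norm_pow, Real.norm_eq_abs]
  exact pow_lt_one₀ (abs_nonneg x) hx two_ne_zero

theorem hgCoeff_eq_ordinaryHypergeometricCoefficient (k n : ℕ) :
    hgCoeff k n =
      ordinaryHypergeometricCoefficient (((k : ℝ) + 1) / 2) ((k : ℝ) / 2) ((k : ℝ) + 1 / 2) n := by
  simp only [hgCoeff, ordinaryHypergeometricCoefficient]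
  ring

theorem zetaHG_eq_ordinaryHypergeometric (k : ℕ) :
    zetaHG k = fun x => ₂F₁ (((k : ℝ) + 1) / 2) ((k : ℝ) / 2) ((k : ℝ) + 1 / 2) (-(x ^ 2)) := by
  funext x
  simp only [zetaHG, hgCoeff_eq_ordinaryHypergeometricCoefficient, ordinaryHypergeometric,
    ordinaryHypergeometric_sum_eq, smul_eq_mul]

/-- **The regular solution of the large-|Λ| soliton equation.** For each integer k ≥ 2,
the series defining ζ converges for |x| < 1, ζ is analytic on (−1, 1) with ζ(0) = 1, and
ζ satisfies x(1+x²)ζ″ + 2(k + (k+1)x²)ζ′ + k(k+1)xζ = 0 on (−1, 1). -/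
theorem zetaHG_solves_ODE (k : ℕ) (hk : 2 ≤ k) :
    (∀ x : ℝ, |x| < 1 → Summable fun n : ℕ => hgCoeff k n * (-(x ^ 2)) ^ n) ∧
    (∀ x ∈ Set.Ioo (-1 : ℝ) 1, AnalyticAt ℝ (zetaHG k) x) ∧
    zetaHG k 0 = 1 ∧
    (∀ x ∈ Set.Ioo (-1 : ℝ) 1,
      x * (1 + x ^ 2) * deriv (deriv (zetaHG k)) x
        + 2 * ((k : ℝ) + ((k : ℝ) + 1) * x ^ 2) * deriv (zetaHG k) x
        + (k : ℝ) * ((k : ℝ) + 1) * x * zetaHG k x = 0) := by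
  have hk' : (2 : ℝ) ≤ k := by exact_mod_cast hk
  have habc (kn : ℕ) : (kn : ℝ) ≠ -(((k : ℝ) + 1) / 2) ∧ (kn : ℝ) ≠ -((k : ℝ) / 2)
      ∧ (kn : ℝ) ≠ -((k : ℝ) + 1 / 2) :=
    ⟨natCast_ne_neg_of_pos (by linarith) kn, natCast_ne_neg_of_pos (by linarith) kn,
      natCast_ne_neg_of_pos (by linarith) kn⟩
  have hF (x : ℝ) (hx : x ∈ Set.Ioo (-1 : ℝ) 1) := analyticAt_ordinaryHypergeometric habc
    (norm_neg_sq_lt_one (abs_lt.2 hx))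
  refine ⟨fun x hx => ?_, fun x hx => ?_, by simp [zetaHG_eq_ordinaryHypergeometric],
    fun x hx => ?_⟩
  · simpa only [hgCoeff_eq_ordinaryHypergeometricCoefficient] using
      (hasSum_ordinaryHypergeometric habc (norm_neg_sq_lt_one hx)).summable
  · rw [zetaHG_eq_ordinaryHypergeometric]
    exact (hF x hx).comp (f := fun y => -(y ^ 2)) (by fun_prop)
  · rw [zetaHG_eq_ordinaryHypergeometric, deriv_deriv_comp_neg_sq
      (Filter.eventually_of_mem (Ioo_mem_nhds hx.1 hx.2) fun y hy => (hF y hy).differentiableAt)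
      (hF x hx).deriv.differentiableAt, (hF x hx).differentiableAt.hasDerivAt.comp_neg_sq.deriv]
    linear_combination (-4 * x) * ordinaryHypergeometric_ode habc (norm_neg_sq_lt_one (abs_lt.2 hx))
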